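/- Let Θ ⊆ ℝ¹¹ be the set of parameter vectors θ = (φ₀, φ₁, γ_u, γ_v, s_{u0}, s_{u1}, s_{v0}, s_{v1}, t₀, t₁, r) with s_{u0}, s_{u1}, s_{v0}, s_{v1}, t₀, t₁ > 0, 0 < r < 1, and φ₀ ≠ 0. Define the moment map F : Θ → ℝ¹¹ by F(θ) = ( s_{u0}·r, φ₀·s_{u0}·r, s_{u0} + t₀, φ₀·s_{u0}, γ_u·s_{u0}, (s_{u1} + γ_u²·s_{u0})·r, s_{u1} + γ_u²·s_{u0} + t₁, φ₁·(s_{u1} + γ_u²·s_{u0}), s_{v0} + φ₀²·s_{u0}, γ_v·s_{v0} + γ_u·φ₀·φ₁·s_{u0}, s_{v1} + γ_v²·s_{v0} + φ₁²·(s_{u1} + γ_u²·s_{u0}) ). Then F is injective on Θ. -/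
import Mathlib


/-- The parameter set `Θ ⊆ ℝ¹¹`: vectors
`θ = (φ₀, φ₁, γ_u, γ_v, s_{u0}, s_{u1}, s_{v0}, s_{v1}, t₀, t₁, r)` with all
variance components positive, `0 < r < 1` and `φ₀ ≠ 0`. -/
def Theta : Set (Fin 11 → ℝ) :=
  {θ | 0 < θ 4 ∧ 0 < θ 5 ∧ 0 < θ 6 ∧ 0 < θ 7 ∧ 0 < θ 8 ∧ 0 < θ 9 ∧
    0 < θ 10 ∧ θ 10 < 1 ∧ θ 0 ≠ 0}

/-- The moment map `F : Θ → ℝ¹¹` whose coordinates are the same-cell and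
cross-cell second moments of the Gaussian hierarchical model, with
`θ = (φ₀, φ₁, γ_u, γ_v, s_{u0}, s_{u1}, s_{v0}, s_{v1}, t₀, t₁, r)`. -/
def momentMap (θ : Fin 11 → ℝ) : Fin 11 → ℝ :=
  ![θ 4 * θ 10,
    θ 0 * θ 4 * θ 10,
    θ 4 + θ 8,
    θ 0 * θ 4,
    θ 2 * θ 4,
    (θ 5 + θ 2 ^ 2 * θ 4) * θ 10,
    θ 5 + θ 2 ^ 2 * θ 4 + θ 9,
    θ 1 * (θ 5 + θ 2 ^ 2 * θ 4),
    θ 6 + θ 0 ^ 2 * θ 4,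
    θ 3 * θ 6 + θ 2 * θ 0 * θ 1 * θ 4,
    θ 7 + θ 3 ^ 2 * θ 6 + θ 1 ^ 2 * (θ 5 + θ 2 ^ 2 * θ 4)]

/-- The moment map `F` is injective on the parameter set `Θ`:
the second moments of the hierarchical model identify the parameters. -/
theorem momentMap_injOn : Set.InjOn momentMap Theta := by
  rintro θ ⟨h4, h5, h6, h7, h8, h9, h10, h10', h0⟩
    ρ ⟨g4, g5, g6, g7, g8, g9, g10, g10', g0⟩ h
  have e0 : θ 4 * θ 10 = ρ 4 * ρ 10 := by simpa [momentMap] using congrFun h 0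
  have e1 : θ 0 * θ 4 * θ 10 = ρ 0 * ρ 4 * ρ 10 := by simpa [momentMap] using congrFun h 1
  have e2 : θ 4 + θ 8 = ρ 4 + ρ 8 := by simpa [momentMap] using congrFun h 2
  have e3 : θ 0 * θ 4 = ρ 0 * ρ 4 := by simpa [momentMap] using congrFun h 3
  have e4 : θ 2 * θ 4 = ρ 2 * ρ 4 := by simpa [momentMap] using congrFun h 4
  have e5 : (θ 5 + θ 2 ^ 2 * θ 4) * θ 10 = (ρ 5 + ρ 2 ^ 2 * ρ 4) * ρ 10 := by simpa [momentMap] using congrFun h 5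
  have e6 : θ 5 + θ 2 ^ 2 * θ 4 + θ 9 = ρ 5 + ρ 2 ^ 2 * ρ 4 + ρ 9 := by simpa [momentMap] using congrFun h 6
  have e7 : θ 1 * (θ 5 + θ 2 ^ 2 * θ 4) = ρ 1 * (ρ 5 + ρ 2 ^ 2 * ρ 4) := by simpa [momentMap] using congrFun h 7
  have e8 : θ 6 + θ 0 ^ 2 * θ 4 = ρ 6 + ρ 0 ^ 2 * ρ 4 := by simpa [momentMap] using congrFun h 8
  have e9 : θ 3 * θ 6 + θ 2 * θ 0 * θ 1 * θ 4 = ρ 3 * ρ 6 + ρ 2 * ρ 0 * ρ 1 * ρ 4 :=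
    congrFun h 9
  have e10 : θ 7 + θ 3 ^ 2 * θ 6 + θ 1 ^ 2 * (θ 5 + θ 2 ^ 2 * θ 4)
      = ρ 7 + ρ 3 ^ 2 * ρ 6 + ρ 1 ^ 2 * (ρ 5 + ρ 2 ^ 2 * ρ 4) := by simpa [momentMap] using congrFun h 10
  have hθ04 : θ 0 * θ 4 ≠ 0 := mul_ne_zero h0 (ne_of_gt h4)
  -- r
  have hr : θ 10 = ρ 10 := by
    have : θ 0 * θ 4 * θ 10 = θ 0 * θ 4 * ρ 10 := by rw [e1, e3]
    exact mul_left_cancel₀ hθ04 this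
  -- s_{u0}
  have hs4 : θ 4 = ρ 4 := by
    have : θ 4 * θ 10 = ρ 4 * θ 10 := by rw [e0, hr]
    exact mul_right_cancel₀ (ne_of_gt h10) this
  -- φ₀
  have hφ0 : θ 0 = ρ 0 := by
    have : θ 0 * θ 4 = ρ 0 * θ 4 := by rw [e3, hs4]
    exact mul_right_cancel₀ (ne_of_gt h4) this
  -- t₀
  have ht8 : θ 8 = ρ 8 := by linarith
  -- γ_u
  have hγu : θ 2 = ρ 2 := by
    have : θ 2 * θ 4 = ρ 2 * θ 4 := by rw [e4, hs4]
    exact mul_right_cancel₀ (ne_of_gt h4) this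
  -- A = A'
  have hA : θ 5 + θ 2 ^ 2 * θ 4 = ρ 5 + ρ 2 ^ 2 * ρ 4 := by
    have : (θ 5 + θ 2 ^ 2 * θ 4) * θ 10 = (ρ 5 + ρ 2 ^ 2 * ρ 4) * θ 10 := by rw [e5, hr]
    exact mul_right_cancel₀ (ne_of_gt h10) this
  have hApos : 0 < θ 5 + θ 2 ^ 2 * θ 4 :=
    add_pos_of_pos_of_nonneg h5 (mul_nonneg (sq_nonneg _) (le_of_lt h4))
  -- s_{u1}
  have hs5 : θ 5 = ρ 5 := by rw [hγu, hs4] at hA; linarith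
  -- t₁
  have ht9 : θ 9 = ρ 9 := by linarith
  -- φ₁
  have hφ1 : θ 1 = ρ 1 := by
    have : θ 1 * (θ 5 + θ 2 ^ 2 * θ 4) = ρ 1 * (θ 5 + θ 2 ^ 2 * θ 4) := by rw [e7, hA]
    exact mul_right_cancel₀ (ne_of_gt hApos) this
  -- s_{v0}
  have hs6 : θ 6 = ρ 6 := by rw [hφ0, hs4] at e8; linarith
  -- γ_v
  have hγv : θ 3 = ρ 3 := by
    have : θ 3 * θ 6 = ρ 3 * θ 6 := by
      have := e9
      rw [hγu, hφ0, hφ1, hs4, ← hs6] at this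
      linarith [this]
    exact mul_right_cancel₀ (ne_of_gt h6) this
  -- s_{v1}
  have hs7 : θ 7 = ρ 7 := by rw [hγv, hs6, hφ1, hA] at e10; linarith
  funext i
  fin_cases i <;> assumption
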